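/- arXiv:1712.00233 — 3 statements merged into one kernel-verified Lean document; each statement's English description precedes it below -/
import Mathlib

section
/- For any f : ∏_{n=1}^N Fin I_n → ℝ, the total variance decomposes as a sum of the variance contributions of the ANOVA terms: V[f] := E[f²] − (E[f])² = Σ_{α ≠ ∅} D_α, where D_α := E[f_α²] = Σ_x w(x) f_α(x_α)². -/
open Finset

/-- Partial expectation `E_{-α}[f]` with respect to the product weights `w`:
sum over all points agreeing with `x` on `α`, weighted by the complement weights. -/
noncomputable def partialE {N : ℕ} {I : Fin N → ℕ} (w : ∀ n : Fin N, Fin (I n) → ℝ)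
    (α : Finset (Fin N)) (f : ((n : Fin N) → Fin (I n)) → ℝ)
    (x : (n : Fin N) → Fin (I n)) : ℝ :=
  ∑ y ∈ Finset.univ.filter (fun y : (n : Fin N) → Fin (I n) => ∀ m ∈ α, y m = x m),
    (∏ m ∈ αᶜ, w m (y m)) * f y

/-- The ANOVA (Sobol) terms, defined by the recursion
`f_α(x) = E_{-α}[f](x_α) - Σ_{β ⊊ α} f_β(x_β)` (so `f_∅ = E[f]`). -/
noncomputable def anova {N : ℕ} {I : Fin N → ℕ} (w : ∀ n : Fin N, Fin (I n) → ℝ)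
    (f : ((n : Fin N) → Fin (I n)) → ℝ) (α : Finset (Fin N))
    (x : (n : Fin N) → Fin (I n)) : ℝ :=
  partialE w α f x - ∑ β ∈ (α.powerset.erase α).attach, anova w f β.1 x
termination_by α.card
decreasing_by
  have h := Finset.mem_erase.mp β.2
  exact Finset.card_lt_card (lt_of_le_of_ne (Finset.mem_powerset.mp h.2) h.1)

/-!
Summing the recursion gives `∑_{β ⊆ α} f_β = E_{-α}[f]`, so the ANOVA terms add up to `f`.
By induction on `α`, averaging `f_α` over any variable `x_n` with `n ∈ α` gives `0`, whereas
`f_β` does not depend on `x_n` when `n ∉ β`. Hence distinct ANOVA terms are orthogonal for the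
product weight, `E[f²] = ∑_α E[f_α²]`, and the term `α = ∅` is the constant `E[f]`.
-/

theorem sum_sum_mul_update {ι R : Type*} [DecidableEq ι] [Fintype ι] [CommSemiring R]
    {β : ι → Type*} [∀ i, Fintype (β i)] (n : ι) (c : β n → R) (H : (∀ i, β i) → R) :
    ∑ x, ∑ i, c (x n) * H (Function.update x n i) = (∑ i, c i) * ∑ x, H x := by
  let σ : Equiv.Perm ((∀ i, β i) × β n) :=
    Function.Involutive.toPerm (fun p => (Function.update p.1 n p.2, p.1 n)) (by intro p; simp)
  calc ∑ x, ∑ i, c (x n) * H (Function.update x n i)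
      = ∑ p : (∀ i, β i) × β n, c (p.1 n) * H (Function.update p.1 n p.2) :=
        (Fintype.sum_prod_type' _).symm
    _ = ∑ p : (∀ i, β i) × β n, c p.2 * H p.1 := Fintype.sum_equiv σ _ _ (fun _ => rfl)
    _ = (∑ i, c i) * ∑ x, H x := by
        rw [Fintype.sum_prod_type_right, Finset.sum_mul_sum, Finset.sum_comm]

section Anova

variable {N : ℕ} {I : Fin N → ℕ} (w : ∀ n : Fin N, Fin (I n) → ℝ)
  (f : ((n : Fin N) → Fin (I n)) → ℝ)

theorem prod_mul_apply_eq_apply_mul_prod_update (x : (n : Fin N) → Fin (I n)) (n : Fin N)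
    (i : Fin (I n)) :
    (∏ m, w m (x m)) * w n i = w n (x n) * ∏ m, w m (Function.update x n i m) := by
  have hrest : ∏ m ∈ univ.erase n, w m (Function.update x n i m)
      = ∏ m ∈ univ.erase n, w m (x m) :=
    prod_congr rfl fun m hm => by rw [Function.update_of_ne (ne_of_mem_erase hm)]
  rw [← mul_prod_erase univ (fun m => w m (x m)) (mem_univ n),
    ← mul_prod_erase univ (fun m => w m (Function.update x n i m)) (mem_univ n), hrest,
    Function.update_self]
  ring

theorem sum_prod_weight_eq_one (hw1 : ∀ n, ∑ i, w n i = 1) :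
    ∑ x : (n : Fin N) → Fin (I n), ∏ n, w n (x n) = 1 := by
  rw [← Fintype.prod_sum]
  simp [hw1]

theorem sum_prod_weight_mul_eq_sum_mul_update (hw1 : ∀ n, ∑ i, w n i = 1) (n : Fin N)
    (g : ((n : Fin N) → Fin (I n)) → ℝ) :
    ∑ x, (∏ m, w m (x m)) * ∑ i, w n i * g (Function.update x n i)
      = ∑ x, (∏ m, w m (x m)) * g x := by
  calc ∑ x, (∏ m, w m (x m)) * ∑ i, w n i * g (Function.update x n i)
      = ∑ x, ∑ i, w n (x n) *
          ((∏ m, w m (Function.update x n i m)) * g (Function.update x n i)) := by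
        refine sum_congr rfl fun x _ => ?_
        rw [Finset.mul_sum]
        refine sum_congr rfl fun i _ => ?_
        rw [← mul_assoc, ← mul_assoc, prod_mul_apply_eq_apply_mul_prod_update]
    _ = ∑ x, (∏ m, w m (x m)) * g x := by
        rw [sum_sum_mul_update n (w n) (fun y => (∏ m, w m (y m)) * g y), hw1, one_mul]

theorem partialE_congr {α : Finset (Fin N)} {x y : (n : Fin N) → Fin (I n)}
    (h : ∀ m ∈ α, x m = y m) : partialE w α f x = partialE w α f y := by
  unfold partialE
  congr 1
  exact filter_congr fun z _ =>
    ⟨fun hz m hm => (hz m hm).trans (h m hm), fun hz m hm => (hz m hm).trans (h m hm).symm⟩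

theorem partialE_univ (x : (n : Fin N) → Fin (I n)) : partialE w univ f x = f x := by
  have hfilter : univ.filter (fun y : (n : Fin N) → Fin (I n) => ∀ m ∈ univ, y m = x m) = {x} := by
    ext y
    simp [funext_iff]
  unfold partialE
  rw [hfilter]
  simp

theorem sum_mul_partialE_update {α : Finset (Fin N)} {n : Fin N} (hn : n ∈ α)
    (x : (n : Fin N) → Fin (I n)) :
    ∑ i, w n i * partialE w α f (Function.update x n i) = partialE w (α.erase n) f x := by
  unfold partialE
  rw [← Finset.sum_fiberwise (univ.filter fun y : (n : Fin N) → Fin (I n) =>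
      ∀ m ∈ α.erase n, y m = x m) (fun y => y n)
      (fun y => (∏ m ∈ (α.erase n)ᶜ, w m (y m)) * f y)]
  refine sum_congr rfl fun i _ => ?_
  rw [Finset.mul_sum, Finset.filter_filter]
  refine sum_congr (filter_congr fun y _ => ?_) fun y hy => ?_
  · constructor
    · intro h
      refine ⟨fun m hm => ?_, by simpa using h n hn⟩
      simpa [Function.update_of_ne (ne_of_mem_erase hm)] using h m (mem_of_mem_erase hm)
    · rintro ⟨h1, h2⟩ m hm
      by_cases hmn : m = n
      · subst hmn; simpa using h2
      · rw [Function.update_of_ne hmn]; exact h1 m (mem_erase.mpr ⟨hmn, hm⟩)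
  · rw [compl_erase, prod_insert (by simp [hn]), (mem_filter.mp hy).2.2]
    ring

theorem anova_eq_partialE_sub (α : Finset (Fin N)) (x : (n : Fin N) → Fin (I n)) :
    anova w f α x = partialE w α f x - ∑ β ∈ α.ssubsets, anova w f β x := by
  rw [anova, sum_attach _ (fun β => anova w f β x), ssubsets]

theorem sum_powerset_anova (α : Finset (Fin N)) (x : (n : Fin N) → Fin (I n)) :
    ∑ β ∈ α.powerset, anova w f β x = partialE w α f x := by
  rw [← add_sum_erase _ _ (mem_powerset_self α), ← ssubsets, anova_eq_partialE_sub]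
  ring

theorem sum_anova (x : (n : Fin N) → Fin (I n)) : ∑ α, anova w f α x = f x := by
  rw [← powerset_univ, sum_powerset_anova, partialE_univ]

theorem anova_empty (x : (n : Fin N) → Fin (I n)) :
    anova w f ∅ x = ∑ y : (n : Fin N) → Fin (I n), (∏ m, w m (y m)) * f y := by
  simpa [partialE] using (sum_powerset_anova w f ∅ x)

theorem anova_congr (α : Finset (Fin N)) {x y : (n : Fin N) → Fin (I n)}
    (h : ∀ m ∈ α, x m = y m) : anova w f α x = anova w f α y := by
  induction α using Finset.strongInduction generalizing x y with
  | _ α ih =>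
    rw [anova_eq_partialE_sub, anova_eq_partialE_sub, partialE_congr w f h]
    congr 1
    refine sum_congr rfl fun β hβ => ?_
    have hβα := mem_ssubsets.mp hβ
    exact ih β hβα fun m hm => h m (hβα.subset hm)

theorem anova_update_of_notMem {β : Finset (Fin N)} {n : Fin N} (hn : n ∉ β)
    (x : (n : Fin N) → Fin (I n)) (i : Fin (I n)) :
    anova w f β (Function.update x n i) = anova w f β x :=
  anova_congr w f β fun _ hm => Function.update_of_ne (ne_of_mem_of_not_mem hm hn) _ _

theorem sum_mul_anova_update_of_notMem (hw1 : ∀ n, ∑ i, w n i = 1) {β : Finset (Fin N)}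
    {n : Fin N} (hn : n ∉ β) (x : (n : Fin N) → Fin (I n)) :
    ∑ i, w n i * anova w f β (Function.update x n i) = anova w f β x := by
  simp only [anova_update_of_notMem w f hn, ← sum_mul, hw1, one_mul]

theorem filter_notMem_ssubsets {α : Finset (Fin N)} {n : Fin N} (hn : n ∈ α) :
    α.ssubsets.filter (fun β => n ∉ β) = (α.erase n).powerset := by
  ext β
  simp only [ssubsets, mem_filter, mem_erase, mem_powerset, subset_erase]
  exact ⟨fun ⟨⟨_, hsub⟩, hnβ⟩ => ⟨hsub, hnβ⟩,
    fun ⟨hsub, hnβ⟩ => ⟨⟨fun h => hnβ (h ▸ hn), hsub⟩, hnβ⟩⟩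

theorem sum_mul_anova_update_of_mem (hw1 : ∀ n, ∑ i, w n i = 1) {α : Finset (Fin N)}
    {n : Fin N} (hn : n ∈ α) (x : (n : Fin N) → Fin (I n)) :
    ∑ i, w n i * anova w f α (Function.update x n i) = 0 := by
  induction α using Finset.strongInduction generalizing x with
  | _ α ih =>
    have hsub : ∀ β ∈ α.ssubsets,
        ∑ i, w n i * anova w f β (Function.update x n i) = if n ∈ β then 0 else anova w f β x := by
      intro β hβ
      split_ifs with hnβ
      · exact ih β (mem_ssubsets.mp hβ) hnβ x
      · exact sum_mul_anova_update_of_notMem w f hw1 hnβ x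
    calc ∑ i, w n i * anova w f α (Function.update x n i)
        = ∑ i, w n i * partialE w α f (Function.update x n i)
            - ∑ β ∈ α.ssubsets, ∑ i, w n i * anova w f β (Function.update x n i) := by
          simp only [anova_eq_partialE_sub w f α, mul_sub, mul_sum, sum_sub_distrib]
          rw [sum_comm (s := univ)]
      _ = partialE w (α.erase n) f x - ∑ β ∈ (α.erase n).powerset, anova w f β x := by
          rw [sum_mul_partialE_update w f hn, sum_congr rfl hsub, sum_ite, sum_const_zero,
            zero_add, filter_notMem_ssubsets hn]
      _ = 0 := by rw [sum_powerset_anova, sub_self]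

theorem sum_prod_weight_mul_anova_mul_anova_of_ne (hw1 : ∀ n, ∑ i, w n i = 1)
    {α β : Finset (Fin N)} (hαβ : α ≠ β) :
    ∑ x, (∏ m, w m (x m)) * (anova w f α x * anova w f β x) = 0 := by
  wlog h : ∃ n ∈ α, n ∉ β generalizing α β
  · have h' : ∃ n ∈ β, n ∉ α := by
      by_contra! h'
      push Not at h
      exact hαβ (Subset.antisymm h h')
    simpa only [mul_comm (anova w f α _)] using this hαβ.symm h'
  obtain ⟨n, hnα, hnβ⟩ := h
  rw [← sum_prod_weight_mul_eq_sum_mul_update w hw1 n]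
  refine sum_eq_zero fun x _ => ?_
  simp only [anova_update_of_notMem w f hnβ, ← mul_assoc, ← sum_mul,
    sum_mul_anova_update_of_mem w f hw1 hnα, zero_mul, mul_zero]

theorem sum_prod_weight_mul_sq_eq_sum_anova (hw1 : ∀ n, ∑ i, w n i = 1) :
    ∑ x, (∏ n, w n (x n)) * f x ^ 2 = ∑ α, ∑ x, (∏ n, w n (x n)) * anova w f α x ^ 2 := by
  calc ∑ x, (∏ n, w n (x n)) * f x ^ 2
      = ∑ x, ∑ α, ∑ β, (∏ n, w n (x n)) * (anova w f α x * anova w f β x) := by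
        refine sum_congr rfl fun x _ => ?_
        rw [← sum_anova w f x, sq, sum_mul_sum, mul_sum]
        simp only [mul_sum]
    _ = ∑ α, ∑ β, ∑ x, (∏ n, w n (x n)) * (anova w f α x * anova w f β x) := by
        rw [sum_comm]
        exact sum_congr rfl fun _ _ => sum_comm
    _ = ∑ α, ∑ x, (∏ n, w n (x n)) * anova w f α x ^ 2 := by
        refine sum_congr rfl fun α _ => ?_
        rw [sum_eq_single_of_mem α (mem_univ α) fun β _ hβα =>
          sum_prod_weight_mul_anova_mul_anova_of_ne w f hw1 hβα.symm]
        simp only [sq]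

end Anova

theorem anova_variance_decomposition_general
    {N : ℕ} {I : Fin N → ℕ}
    (w : ∀ n : Fin N, Fin (I n) → ℝ)
    (hw1 : ∀ n, ∑ i, w n i = 1)
    (f : ((n : Fin N) → Fin (I n)) → ℝ) :
    (∑ x : (n : Fin N) → Fin (I n), (∏ n, w n (x n)) * f x ^ 2)
      - (∑ x : (n : Fin N) → Fin (I n), (∏ n, w n (x n)) * f x) ^ 2
    = ∑ α ∈ (Finset.univ : Finset (Finset (Fin N))).erase ∅,
        ∑ x : (n : Fin N) → Fin (I n), (∏ n, w n (x n)) * anova w f α x ^ 2 := by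
  have hempty : ∑ x : (n : Fin N) → Fin (I n), (∏ n, w n (x n)) * anova w f ∅ x ^ 2
      = (∑ x : (n : Fin N) → Fin (I n), (∏ n, w n (x n)) * f x) ^ 2 := by
    simp only [anova_empty, ← sum_mul, sum_prod_weight_eq_one w hw1, one_mul]
  rw [sum_prod_weight_mul_sq_eq_sum_anova w f hw1, ← add_sum_erase _ _ (mem_univ ∅), hempty]
  ring

/-- the total variance decomposes as the sum of the variance
contributions of the nonempty ANOVA terms: `V[f] = Σ_{α ≠ ∅} D_α` with
`D_α := E[f_α²]`. -/
theorem anova_variance_decomposition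
    {N : ℕ} (hN : 1 ≤ N) {I : Fin N → ℕ} (hI : ∀ n, 1 ≤ I n)
    (w : ∀ n : Fin N, Fin (I n) → ℝ)
    (hw0 : ∀ n i, 0 ≤ w n i) (hw1 : ∀ n, ∑ i, w n i = 1)
    (f : ((n : Fin N) → Fin (I n)) → ℝ) :
    (∑ x : (n : Fin N) → Fin (I n), (∏ n, w n (x n)) * f x ^ 2)
      - (∑ x : (n : Fin N) → Fin (I n), (∏ n, w n (x n)) * f x) ^ 2
    = ∑ α ∈ (Finset.univ : Finset (Finset (Fin N))).erase ∅,
        ∑ x : (n : Fin N) → Fin (I n), (∏ n, w n (x n)) * anova w f α x ^ 2 :=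
  anova_variance_decomposition_general w hw1 f
end

section
/- Let A : ({0,1})^N → ℝ be a tensor given in tensor train format by cores A^(n) : Fin 2 → Matrix (Fin R_{n-1}) (Fin R_n) ℝ (R_0 = R_N = 1). Define new cores B^(n) by B^(n)[0] := A^(n)[0] − A^(n)[1] and B^(n)[1] := A^(n)[1]. Then the tensor B represented by the cores B^(n) satisfies, for every α ⊆ {1,...,N}, B_α = Σ_{β ⊇ α} (−1)^{|β|−|α|} A_β; in particular, this transformation inverts the superset aggregation (Möbius inversion over the subset lattice realized by slice-wise core operations). -/
open Finset

/-- Ordered matrix product `A 0 * A 1 * ... * A (N-1)` of a chain of matrices with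
compatible sizes `R 0 × R 1`, `R 1 × R 2`, ..., `R (N-1) × R N`. -/
def matChain {N : ℕ} (R : Fin (N+1) → ℕ)
    (A : ∀ n : Fin N, Matrix (Fin (R n.castSucc)) (Fin (R n.succ)) ℝ) :
    Matrix (Fin (R 0)) (Fin (R (Fin.last N))) ℝ :=
  Fin.induction (motive := fun i => Matrix (Fin (R 0)) (Fin (R i)) ℝ)
    1 (fun n M => M * A n) (Fin.last N)

/-- The matrix product `T^(1)[x_1] * ... * T^(N)[x_N]` of the tensor-train cores `T`
evaluated at the multi-index `x`.  When `R 0 = R N = 1` this is a `1 × 1` matrix whose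
single entry is the value of the represented tensor at `x`. -/
def ttProd {N : ℕ} {I : Fin N → ℕ} (R : Fin (N+1) → ℕ)
    (T : ∀ n : Fin N, Fin (I n) → Matrix (Fin (R n.castSucc)) (Fin (R n.succ)) ℝ)
    (x : ∀ n : Fin N, Fin (I n)) : Matrix (Fin (R 0)) (Fin (R (Fin.last N))) ℝ :=
  matChain R (fun n => T n (x n))

/-- The binary tuple (indicator vector) associated to a subset `α ⊆ {1,...,N}`:
`j_n = 1` iff `n ∈ α`. -/
def ind {N : ℕ} (α : Finset (Fin N)) : Fin N → Fin 2 :=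
  fun n => if n ∈ α then 1 else 0

/-!
Each new core slice is a signed combination of old ones: `B⁽ⁿ⁾[0] = A⁽ⁿ⁾[0] - A⁽ⁿ⁾[1]` and
`B⁽ⁿ⁾[1] = A⁽ⁿ⁾[1]`. The matrix chain is multilinear in its factors, so `B_α` expands into a
sum over index tuples `g` with `g n = 1` for `n ∈ α`, weighted by `(-1)` to the number of
`n ∉ α` with `g n = 1`. These tuples are the indicator vectors of the supersets `β ⊇ α`, and the
weight is `(-1)^(|β| - |α|)`.
-/

@[simp]
lemma matChain_zero (R : Fin 1 → ℕ)
    (A : ∀ n : Fin 0, Matrix (Fin (R n.castSucc)) (Fin (R n.succ)) ℝ) :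
    matChain R A = (1 : Matrix (Fin (R 0)) (Fin (R 0)) ℝ) := rfl

lemma matChain_succ {N : ℕ} (R : Fin (N+2) → ℕ)
    (A : ∀ n : Fin (N+1), Matrix (Fin (R n.castSucc)) (Fin (R n.succ)) ℝ) :
    matChain R A = matChain (fun i => R i.castSucc) (fun n => A n.castSucc) * A (Fin.last N) := by
  have prefix_eq : ∀ i : Fin (N+1),
      Fin.induction (motive := fun i => Matrix (Fin (R 0)) (Fin (R i)) ℝ)
        (1 : Matrix (Fin (R 0)) (Fin (R 0)) ℝ) (fun n M => M * A n) i.castSucc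
      = Fin.induction (motive := fun i : Fin (N+1) => Matrix (Fin (R 0)) (Fin (R i.castSucc)) ℝ)
        (1 : Matrix (Fin (R 0)) (Fin (R 0)) ℝ) (fun n M => M * A n.castSucc) i := by
    intro i
    induction i using Fin.induction with
    | zero => rfl
    | succ n ih =>
      exact congrArg (fun M : Matrix (Fin (R 0)) (Fin (R n.castSucc.castSucc)) ℝ =>
        M * A n.castSucc) ih
  exact congrArg (fun M : Matrix (Fin (R 0)) (Fin (R (Fin.last N).castSucc)) ℝ =>
    M * A (Fin.last N)) (prefix_eq (Fin.last N))

lemma matChain_smul {N : ℕ} (R : Fin (N+1) → ℕ) (c : Fin N → ℝ)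
    (A : ∀ n : Fin N, Matrix (Fin (R n.castSucc)) (Fin (R n.succ)) ℝ) :
    matChain R (fun n => c n • A n) = (∏ n, c n) • matChain R A := by
  induction N with
  | zero => simp
  | succ N ih =>
    rw [matChain_succ, matChain_succ R A, ih, Fin.prod_univ_castSucc, Matrix.smul_mul,
      Matrix.mul_smul, smul_smul]
    rfl

lemma matChain_sum {N : ℕ} {ι : Type*} (R : Fin (N+1) → ℕ) (S : Fin N → Finset ι)
    (A : ∀ n : Fin N, ι → Matrix (Fin (R n.castSucc)) (Fin (R n.succ)) ℝ) :
    matChain R (fun n => ∑ k ∈ S n, A n k)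
      = ∑ g ∈ Fintype.piFinset S, matChain R (fun n => A n (g n)) := by
  induction N with
  | zero => simp [Fintype.piFinset_of_isEmpty]
  | succ N ih =>
    have piFinset_eq : Fintype.piFinset S
        = (S (Fin.last N) ×ˢ Fintype.piFinset (Fin.init S)).map
            (Fin.snocEquiv fun _ => ι).toEmbedding := by
      simpa using Finset.filter_piFinset_eq_map_snocEquiv S (fun _ => True)
    rw [matChain_succ, ih, Matrix.sum_mul, piFinset_eq, sum_map, sum_product, sum_comm]
    refine sum_congr rfl fun g _ => ?_
    rw [Matrix.mul_sum]
    refine sum_congr rfl fun k _ => ?_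
    simp [matChain_succ, Fin.snocEquiv]

lemma ind_eq_one_iff {N : ℕ} {β : Finset (Fin N)} {n : Fin N} : ind β n = 1 ↔ n ∈ β := by
  by_cases h : n ∈ β <;> simp [ind, h]

lemma ind_filter_eq_one {N : ℕ} (g : Fin N → Fin 2) : ind {n | g n = 1} = g := by
  funext n
  rcases Fin.exists_fin_two.mp ⟨g n, rfl⟩ with h | h <;> simp [ind, h]

lemma sum_superset_ind {N : ℕ} {M : Type*} [AddCommMonoid M] (α : Finset (Fin N))
    (f : (Fin N → Fin 2) → M) :
    ∑ β ∈ univ.filter (α ⊆ ·), f (ind β)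
      = ∑ g ∈ Fintype.piFinset fun n => if n ∈ α then {1} else univ, f g := by
  refine sum_nbij' ind (fun g => ({n | g n = 1} : Finset (Fin N))) ?_ ?_ ?_ ?_ fun _ _ => rfl
  · intro β hβ
    simp only [mem_filter, mem_univ, true_and] at hβ
    simp only [Fintype.mem_piFinset]
    intro n
    split_ifs with hn
    · simpa [ind_eq_one_iff] using hβ hn
    · exact mem_univ _
  · intro g hg
    simp only [mem_filter, mem_univ, true_and]
    intro n hn
    simpa [hn] using Fintype.mem_piFinset.mp hg n
  · intro β _
    ext n
    simp [ind_eq_one_iff]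
  · intro g _
    exact ind_filter_eq_one g

theorem tt_superset_moebius_inversion_general
    {N : ℕ}
    (R : Fin (N+1) → ℕ)
    (A : ∀ n : Fin N, Fin 2 → Matrix (Fin (R n.castSucc)) (Fin (R n.succ)) ℝ)
    (α : Finset (Fin N)) (i : Fin (R 0)) (j : Fin (R (Fin.last N))) :
    ttProd R (fun n k => if k = 0 then A n 0 - A n 1 else A n 1) (ind α) i j
      = ∑ β ∈ Finset.univ.filter (fun β : Finset (Fin N) => α ⊆ β),
          (-1 : ℝ) ^ (β.card - α.card) * ttProd R A (ind β) i j := by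
  set S : Fin N → Finset (Fin 2) := fun n => if n ∈ α then {1} else univ
  set c : Fin N → Fin 2 → ℝ := fun n k => if k = 1 ∧ n ∉ α then -1 else 1
  have core_eq : ∀ n, (if ind α n = 0 then A n 0 - A n 1 else A n 1)
      = ∑ k ∈ S n, c n k • A n k := by
    intro n
    by_cases hn : n ∈ α
    · simp [ind, S, c, hn]
    · simp [ind, S, c, hn, sub_eq_add_neg]
  have sign_eq : ∀ β, α ⊆ β → ∏ n, c n (ind β n) = (-1 : ℝ) ^ (β.card - α.card) := by
    intro β hαβ
    rw [← card_sdiff_of_subset hαβ, ← prod_const, ← univ_inter (β \ α), ← prod_ite_mem]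
    refine prod_congr rfl fun n _ => ?_
    by_cases hβ : n ∈ β <;> by_cases hα : n ∈ α <;> simp_all [c, ind]
  calc ttProd R (fun n k => if k = 0 then A n 0 - A n 1 else A n 1) (ind α) i j
      = ∑ g ∈ Fintype.piFinset S, ((∏ n, c n (g n)) • ttProd R A g) i j := by
        simp only [ttProd, core_eq, matChain_sum, matChain_smul, Matrix.sum_apply]
    _ = _ := by
        rw [← sum_superset_ind]
        refine sum_congr rfl fun β hβ => ?_
        rw [Matrix.smul_apply, sign_eq β (mem_filter.mp hβ).2, smul_eq_mul]

/-- replacing each core slice pair `(A^(n)[0], A^(n)[1])` by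
`(A^(n)[0] - A^(n)[1], A^(n)[1])` turns a TT tensor `A` on `{0,1}^N` into the Möbius
inversion of the superset aggregation: `B_α = Σ_{β ⊇ α} (-1)^{|β| - |α|} A_β`. -/
theorem tt_superset_moebius_inversion
    {N : ℕ} (hN : 1 ≤ N)
    (R : Fin (N+1) → ℕ) (hR0 : R 0 = 1) (hRN : R (Fin.last N) = 1)
    (A : ∀ n : Fin N, Fin 2 → Matrix (Fin (R n.castSucc)) (Fin (R n.succ)) ℝ)
    (α : Finset (Fin N)) (i : Fin (R 0)) (j : Fin (R (Fin.last N))) :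
    ttProd R (fun n k => if k = 0 then A n 0 - A n 1 else A n 1) (ind α) i j
      = ∑ β ∈ Finset.univ.filter (fun β : Finset (Fin N) => α ⊆ β),
          (-1 : ℝ) ^ (β.card - α.card) * ttProd R A (ind β) i j :=
  tt_superset_moebius_inversion_general R A α i j
end

section
/- Let A : ({0,1})^N → ℝ be a tensor given in tensor train format by cores A^(n) : Fin 2 → Matrix (Fin R_{n-1}) (Fin R_n) ℝ (R_0 = R_N = 1). Define new cores C^(n) by C^(n)[0] := A^(n)[0] and C^(n)[1] := A^(n)[0] + A^(n)[1]. Then the tensor C represented by the cores C^(n) satisfies, for every α ⊆ {1,...,N}, C_α = Σ_{β ⊆ α} A_β; i.e., the transformed tensor train represents exactly the closed (subset) aggregation of A. -/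
/-!
Each aggregated core is `C^(n)[j_n] = A^(n)[0] + [n ∈ α] A^(n)[1]`, so `C_α` is a matrix product
in which exactly the factors indexed by `α` are sums. The product is additive in each factor
separately, so expanding one sum at a time (induction on `α`) writes it as the sum, over all
`β ⊆ α`, of the products that pick `A^(n)[1]` for `n ∈ β` and `A^(n)[0]` otherwise, i.e. of `A_β`.
-/

open Finset

section MatChain

variable {N : ℕ} (R : Fin (N+1) → ℕ)

/-- The partial product `T 0 * ... * T (i-1)`. -/
def matChainUpTo (T : ∀ n : Fin N, Matrix (Fin (R n.castSucc)) (Fin (R n.succ)) ℝ)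
    (i : Fin (N+1)) : Matrix (Fin (R 0)) (Fin (R i)) ℝ :=
  Fin.induction (motive := fun i => Matrix (Fin (R 0)) (Fin (R i)) ℝ) 1 (fun n M => M * T n) i

variable (T : ∀ n : Fin N, Matrix (Fin (R n.castSucc)) (Fin (R n.succ)) ℝ) (a : Fin N)

theorem matChainUpTo_succ (n : Fin N) :
    matChainUpTo R T n.succ = matChainUpTo R T n.castSucc * T n :=
  Fin.induction_succ _ _ n

theorem matChainUpTo_update_of_le (M : Matrix (Fin (R a.castSucc)) (Fin (R a.succ)) ℝ)
    {i : Fin (N+1)} (hi : i ≤ a.castSucc) :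
    matChainUpTo R (Function.update T a M) i = matChainUpTo R T i := by
  induction i using Fin.induction with
  | zero => rfl
  | succ k ih =>
    have hka : k ≠ a := by rintro rfl; exact absurd hi (by simp)
    rw [matChainUpTo_succ, matChainUpTo_succ, ih (le_trans (Fin.castSucc_le_succ k) hi),
      Function.update_of_ne hka]

theorem matChainUpTo_update_add (M M' : Matrix (Fin (R a.castSucc)) (Fin (R a.succ)) ℝ)
    {i : Fin (N+1)} (hi : a.castSucc < i) :
    matChainUpTo R (Function.update T a (M + M')) i =
      matChainUpTo R (Function.update T a M) i + matChainUpTo R (Function.update T a M') i := by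
  induction i using Fin.induction with
  | zero => exact absurd hi (Fin.not_lt_zero _)
  | succ k ih =>
    simp only [matChainUpTo_succ]
    rcases eq_or_ne k a with rfl | hka
    · simp only [matChainUpTo_update_of_le R T k _ le_rfl, Function.update_self, Matrix.mul_add]
    · have hk : a.castSucc < k.castSucc := by
        rw [Fin.castSucc_lt_succ_iff] at hi
        exact lt_of_le_of_ne hi (by simpa using hka.symm)
      simp only [ih hk, Function.update_of_ne hka, Matrix.add_mul]

theorem matChain_update_add (M M' : Matrix (Fin (R a.castSucc)) (Fin (R a.succ)) ℝ) :
    matChain R (Function.update T a (M + M')) =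
      matChain R (Function.update T a M) + matChain R (Function.update T a M') :=
  matChainUpTo_update_add R T a M M' (Fin.castSucc_lt_last a)

theorem matChain_ite_add_eq_sum_powerset
    (X Y : ∀ n : Fin N, Matrix (Fin (R n.castSucc)) (Fin (R n.succ)) ℝ) (α : Finset (Fin N)) :
    matChain R (fun n => if n ∈ α then X n + Y n else X n) =
      ∑ β ∈ α.powerset, matChain R (fun n => if n ∈ β then Y n else X n) := by
  induction α using Finset.induction_on generalizing X with
  | empty => simp
  | insert a s ha ih =>
    have hsplit : (fun n => if n ∈ insert a s then X n + Y n else X n) =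
        Function.update (fun n => if n ∈ s then X n + Y n else X n) a (X a + Y a) := by
      ext1 n
      rcases eq_or_ne n a with rfl | hna <;> simp [*]
    have hX : Function.update (fun n => if n ∈ s then X n + Y n else X n) a (X a) =
        fun n => if n ∈ s then X n + Y n else X n := by
      simp [ha]
    -- The `Y a` branch is again of the inductive shape, with `X a` replaced by `Y a`.
    have hY : Function.update (fun n => if n ∈ s then X n + Y n else X n) a (Y a) =
        fun n => if n ∈ s then Function.update X a (Y a) n + Y n
          else Function.update X a (Y a) n := by
      ext1 n
      rcases eq_or_ne n a with rfl | hna <;> simp [*]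
    rw [hsplit, matChain_update_add, hX, hY, ih, ih, sum_powerset_insert ha]
    congr 1
    refine sum_congr rfl fun β hβ => congrArg (matChain R) (funext fun n => ?_)
    have haβ : a ∉ β := fun h => ha (mem_powerset.mp hβ h)
    rcases eq_or_ne n a with rfl | hna <;> simp [*]

end MatChain

theorem ttProd_ind {N : ℕ} (R : Fin (N+1) → ℕ)
    (T : ∀ n : Fin N, Fin 2 → Matrix (Fin (R n.castSucc)) (Fin (R n.succ)) ℝ)
    (β : Finset (Fin N)) :
    ttProd R T (ind β) = matChain R (fun n => if n ∈ β then T n 1 else T n 0) := by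
  simp only [ttProd, ind, apply_ite]

theorem tt_closed_aggregation_general
    {N : ℕ}
    (R : Fin (N+1) → ℕ)
    (A : ∀ n : Fin N, Fin 2 → Matrix (Fin (R n.castSucc)) (Fin (R n.succ)) ℝ)
    (α : Finset (Fin N)) (i : Fin (R 0)) (j : Fin (R (Fin.last N))) :
    ttProd R (fun n k => if k = 0 then A n 0 else A n 0 + A n 1) (ind α) i j
      = ∑ β ∈ α.powerset, ttProd R A (ind β) i j := by
  simp only [ttProd_ind, ← Matrix.sum_apply, ← matChain_ite_add_eq_sum_powerset]
  simp

/-- replacing each core slice pair `(A^(n)[0], A^(n)[1])` by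
`(A^(n)[0], A^(n)[0] + A^(n)[1])` turns a TT tensor `A` on `{0,1}^N` into the tensor of
closed (subset) aggregations: `C_α = Σ_{β ⊆ α} A_β`. -/
theorem tt_closed_aggregation
    {N : ℕ} (hN : 1 ≤ N)
    (R : Fin (N+1) → ℕ) (hR0 : R 0 = 1) (hRN : R (Fin.last N) = 1)
    (A : ∀ n : Fin N, Fin 2 → Matrix (Fin (R n.castSucc)) (Fin (R n.succ)) ℝ)
    (α : Finset (Fin N)) (i : Fin (R 0)) (j : Fin (R (Fin.last N))) :
    ttProd R (fun n k => if k = 0 then A n 0 else A n 0 + A n 1) (ind α) i j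
      = ∑ β ∈ α.powerset, ttProd R A (ind β) i j :=
  tt_closed_aggregation_general R A α i j
end
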